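/- arXiv:2505.07717 — 2 statements merged into one kernel-verified Lean document; each statement's English description precedes it below -/
import Mathlib

section
/- Let δ ∈ [0,1), ε ∈ (0,1], ζ ≥ 0 and C ≥ 0, and let z : ℕ → ℝ be a sequence with z_t ≥ 0 for all t satisfying z_t ≤ (1 − δ)·(1 − ε)·z_{t−1} + (1 − δ)·ζ + δ·C for all t ≥ 1. Then limsup_{t→∞} z_t ≤ (1/ε)·(ζ + δ·C/(1 − δ)). -/
open Filter

/-- Deterministic core of Theorem 2: limsup bound for the constrained recursion. -/
theorem stmt_4 (δ ε ζ C : ℝ) (hδ0 : 0 ≤ δ) (hδ1 : δ < 1)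
    (hε0 : 0 < ε) (hε1 : ε ≤ 1) (hζ : 0 ≤ ζ) (hC : 0 ≤ C)
    (z : ℕ → ℝ) (hz : ∀ t, 0 ≤ z t)
    (hrec : ∀ t : ℕ, 1 ≤ t → z t ≤ (1 - δ) * (1 - ε) * z (t - 1) + (1 - δ) * ζ + δ * C) :
    Filter.limsup z Filter.atTop ≤ (1 / ε) * (ζ + δ * C / (1 - δ)) := by
  set a : ℝ := (1 - δ) * (1 - ε) with ha_def
  set b : ℝ := (1 - δ) * ζ + δ * C with hb_def
  have hδ1' : 0 < 1 - δ := by linarith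
  have ha0 : 0 ≤ a := mul_nonneg (by linarith) (by linarith)
  have ha1 : a < 1 := by
    calc a ≤ 1 * (1 - ε) := by
            apply mul_le_mul_of_nonneg_right (by linarith) (by linarith)
      _ < 1 := by linarith
  have hb0 : 0 ≤ b := by
    apply add_nonneg (mul_nonneg (by linarith) hζ) (mul_nonneg hδ0 hC)
  have h1a : 0 < 1 - a := by linarith
  have hεδ : ε * (1 - δ) ≤ 1 - a := by nlinarith
  set K : ℝ := b / (1 - a) with hK_def
  have hK0 : 0 ≤ K := div_nonneg hb0 h1a.le
  -- inductive bound
  have hbound : ∀ t, z t ≤ a ^ t * z 0 + K := by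
    intro t
    induction t with
    | zero => simp; linarith
    | succ n ih =>
      have hr := hrec (n + 1) (by omega)
      simp only [Nat.add_sub_cancel] at hr
      have : a * z n + b ≤ a * (a ^ n * z 0 + K) + b := by nlinarith
      have hKfix : a * K + b = K := by
        rw [hK_def, eq_div_iff h1a.ne', add_mul, mul_assoc, div_mul_cancel₀ _ h1a.ne']
        ring
      calc z (n + 1) ≤ a * z n + b := by linarith [hr]
        _ ≤ a * (a ^ n * z 0 + K) + b := this
        _ = a ^ (n + 1) * z 0 + (a * K + b) := by ring
        _ = a ^ (n + 1) * z 0 + K := by rw [hKfix]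
  have htend : Tendsto (fun t : ℕ => a ^ t * z 0 + K) atTop (nhds K) := by
    have := (tendsto_pow_atTop_nhds_zero_of_lt_one ha0 ha1).mul_const (z 0)
    simpa using this.add_const K
  have hls : limsup z atTop ≤ K := by
    have h1 : limsup z atTop ≤ limsup (fun t : ℕ => a ^ t * z 0 + K) atTop := by
      exact limsup_le_limsup (Eventually.of_forall hbound)
        (isCoboundedUnder_le_of_le atTop hz)
        htend.isBoundedUnder_le
    rwa [htend.limsup_eq] at h1
  refine hls.trans ?_
  have h2 : K ≤ b / (ε * (1 - δ)) :=
    div_le_div_of_nonneg_left hb0 (by positivity) hεδ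
  refine h2.trans (le_of_eq ?_)
  field_simp [hb_def]
  ring
end

section
/- Let (Ω, F, P) be a probability space, let C ≥ 0, δ ∈ [0,1), ε ∈ (0,1], ζ ≥ 0, and let X : ℕ → Ω → ℝ be a sequence of measurable functions with 0 ≤ X_t(ω) ≤ C for P-almost every ω and every t ∈ ℕ. Suppose that for every t ≥ 1 there exists a measurable event A_t ⊆ Ω with P(A_t) = 1 − δ such that ∫_{A_t} X_t dP ≤ (1 − δ)·((1 − ε)·∫ X_{t−1} dP + ζ). Then the sequence t ↦ ∫ (min_{k ≤ t} X_k(ω)) dP(ω) converges, and its limit is at most (1/ε)·(ζ + δ·C/(1 − δ)). -/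
open MeasureTheory Filter

/-- Theorem 2 of the paper (convergence of the constrained unrolled PGD network) in
abstract measure-theoretic form. -/
theorem stmt_8 {Ω : Type*} [MeasurableSpace Ω] (P : Measure Ω) [IsProbabilityMeasure P]
    (C δ ε ζ : ℝ) (hC : 0 ≤ C) (hδ0 : 0 ≤ δ) (hδ1 : δ < 1)
    (hε0 : 0 < ε) (hε1 : ε ≤ 1) (hζ : 0 ≤ ζ)
    (X : ℕ → Ω → ℝ) (hmeas : ∀ t, Measurable (X t))
    (hbd : ∀ t, ∀ᵐ ω ∂P, 0 ≤ X t ω ∧ X t ω ≤ C)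
    (hcons : ∀ t : ℕ, 1 ≤ t → ∃ A : Set Ω, MeasurableSet A ∧ (P A).toReal = 1 - δ ∧
      ∫ ω in A, X t ω ∂P ≤ (1 - δ) * ((1 - ε) * ∫ ω, X (t - 1) ω ∂P + ζ)) :
    ∃ L : ℝ, L ≤ (1 / ε) * (ζ + δ * C / (1 - δ)) ∧
      Tendsto (fun t => ∫ ω, (Finset.range (t + 1)).inf' (by simp) (fun k => X k ω) ∂P)
        atTop (nhds L) := by
  have h1δ : (0:ℝ) < 1 - δ := by linarith
  set q : ℝ := (1 - δ) * (1 - ε) with hq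
  have hq0 : 0 ≤ q := mul_nonneg h1δ.le (by linarith)
  have hq1 : q < 1 := by nlinarith
  set c : ℝ := (1 - δ) * ζ + δ * C with hc
  have hc0 : 0 ≤ c := by
    have := mul_nonneg h1δ.le hζ
    have := mul_nonneg hδ0 hC
    linarith
  have h1q : (0:ℝ) < 1 - q := by linarith
  set K : ℝ := c / (1 - q) with hK
  have hK0 : 0 ≤ K := div_nonneg hc0 h1q.le
  -- integrability of X t
  have hint : ∀ t, Integrable (X t) P := by
    intro t
    refine ⟨(hmeas t).aestronglyMeasurable, HasFiniteIntegral.of_bounded (C := C) ?_⟩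
    filter_upwards [hbd t] with ω h
    rw [Real.norm_eq_abs, abs_le]
    exact ⟨by linarith [h.1], h.2⟩
  have hbd' : ∀ᵐ ω ∂P, ∀ k, 0 ≤ X k ω ∧ X k ω ≤ C := ae_all_iff.2 hbd
  -- the running minimum
  have hYmeas : ∀ t, Measurable
      (fun ω => (Finset.range (t + 1)).inf' (by simp) (fun k => X k ω)) := by
    intro t
    induction t with
    | zero => simpa using hmeas 0
    | succ n ih =>
      have h : ∀ ω, (Finset.range (n + 2)).inf' (by simp) (fun k => X k ω)
          = min (X (n + 1) ω) ((Finset.range (n + 1)).inf' (by simp) (fun k => X k ω)) := by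
        intro ω
        refine le_antisymm ?_ ?_
        · refine le_min (Finset.inf'_le _ (by simp)) ?_
          exact Finset.inf'_mono _ (Finset.range_subset_range.2 (by omega)) _
        · refine Finset.le_inf' _ _ fun b hb => ?_
          rcases Nat.lt_succ_iff_lt_or_eq.1 (Finset.mem_range.1 hb) with hb' | hb'
          · exact le_trans (min_le_right _ _)
              (Finset.inf'_le _ (Finset.mem_range.2 hb'))
          · subst hb'; exact min_le_left _ _
      simp_rw [h]
      exact (hmeas (n + 1)).min ih
  have hYbd : ∀ t, ∀ᵐ ω ∂P,
      0 ≤ (Finset.range (t + 1)).inf' (by simp) (fun k => X k ω) ∧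
      (Finset.range (t + 1)).inf' (by simp) (fun k => X k ω) ≤ C := by
    intro t
    filter_upwards [hbd'] with ω h
    constructor
    · exact Finset.le_inf' _ _ fun k _ => (h k).1
    · exact le_trans (Finset.inf'_le _ (Finset.self_mem_range_succ t)) (h t).2
  have hYint : ∀ t, Integrable
      (fun ω => (Finset.range (t + 1)).inf' (by simp) (fun k => X k ω)) P := by
    intro t
    refine ⟨(hYmeas t).aestronglyMeasurable, HasFiniteIntegral.of_bounded (C := C) ?_⟩
    filter_upwards [hYbd t] with ω h
    rw [Real.norm_eq_abs, abs_le]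
    exact ⟨by linarith [h.1], h.2⟩
  set m : ℕ → ℝ :=
    fun t => ∫ ω, (Finset.range (t + 1)).inf' (by simp) (fun k => X k ω) ∂P with hm
  set a : ℕ → ℝ := fun t => ∫ ω, X t ω ∂P with ha
  have hm0 : ∀ t, 0 ≤ m t := fun t =>
    integral_nonneg_of_ae ((hYbd t).mono fun ω h => h.1)
  have ha0 : ∀ t, 0 ≤ a t := fun t =>
    integral_nonneg_of_ae ((hbd t).mono fun ω h => h.1)
  have haC : ∀ t, a t ≤ C := by
    intro t
    calc a t ≤ ∫ _, C ∂P :=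
          integral_mono_ae (hint t) (integrable_const C)
            ((hbd t).mono fun ω h => h.2)
      _ = C := by simp
  have hma : ∀ t, m t ≤ a t := by
    intro t
    refine integral_mono (hYint t) (hint t) fun ω => ?_
    exact Finset.inf'_le _ (Finset.self_mem_range_succ t)
  -- recursion
  have hrec : ∀ t, a (t + 1) ≤ q * a t + c := by
    intro t
    obtain ⟨A, hA, hPA, hle⟩ := hcons (t + 1) (by omega)
    simp only [Nat.add_sub_cancel] at hle
    have hPAc : (P Aᶜ).toReal = δ := by
      rw [prob_compl_eq_one_sub hA, ENNReal.toReal_sub_of_le prob_le_one ENNReal.one_ne_top,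
        ENNReal.toReal_one, hPA]
      ring
    have hcompl : ∫ ω in Aᶜ, X (t + 1) ω ∂P ≤ δ * C := by
      have := norm_setIntegral_le_of_norm_le_const_ae (μ := P) (s := Aᶜ) (C := C)
        (f := fun ω => X (t + 1) ω)
        (measure_lt_top P Aᶜ) ?_
      · calc ∫ ω in Aᶜ, X (t + 1) ω ∂P ≤ ‖∫ ω in Aᶜ, X (t + 1) ω ∂P‖ := le_abs_self _
          _ ≤ C * (P Aᶜ).toReal := this
          _ = δ * C := by rw [hPAc]; ring
      · filter_upwards [ae_restrict_of_ae (hbd (t + 1))] with ω h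
        rw [Real.norm_eq_abs, abs_le]
        exact ⟨by linarith [h.1], h.2⟩
    have hsplit : a (t + 1) = (∫ ω in A, X (t + 1) ω ∂P) + ∫ ω in Aᶜ, X (t + 1) ω ∂P :=
      (integral_add_compl hA (hint (t + 1))).symm
    rw [hsplit]
    have : (1 - δ) * ((1 - ε) * a t + ζ) + δ * C = q * a t + c := by rw [hq, hc]; ring
    linarith [hle]
  have hub : ∀ t, a t ≤ q ^ t * C + K := by
    intro t
    induction t with
    | zero => simpa using le_trans (haC 0) (by linarith)
    | succ n ih =>
      have hKeq : q * K + c = K := by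
        rw [hK]
        field_simp
        ring
      calc a (n + 1) ≤ q * a n + c := hrec n
        _ ≤ q * (q ^ n * C + K) + c := by nlinarith [mul_le_mul_of_nonneg_left ih hq0]
        _ = q ^ (n + 1) * C + (q * K + c) := by ring
        _ = q ^ (n + 1) * C + K := by rw [hKeq]
  -- convergence of m
  have hanti : Antitone m := by
    refine antitone_nat_of_succ_le fun t => ?_
    refine integral_mono (hYint (t + 1)) (hYint t) fun ω => ?_
    exact Finset.inf'_mono _ (Finset.range_subset_range.2 (by omega)) _
  have hbdd : BddBelow (Set.range m) := ⟨0, by rintro x ⟨t, rfl⟩; exact hm0 t⟩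
  have htend : Tendsto m atTop (nhds (⨅ t, m t)) := tendsto_atTop_ciInf hanti hbdd
  refine ⟨⨅ t, m t, ?_, htend⟩
  have hLK : (⨅ t, m t) ≤ K := by
    have h1 : Tendsto (fun t => q ^ t * C + K) atTop (nhds (0 * C + K)) :=
      ((tendsto_pow_atTop_nhds_zero_of_lt_one hq0 hq1).mul_const C).add_const K
    have h2 : ∀ t, (⨅ t, m t) ≤ q ^ t * C + K := fun t =>
      (ciInf_le hbdd t).trans ((hma t).trans (hub t))
    have := ge_of_tendsto' h1 h2
    linarith
  have hKB : K ≤ (1 / ε) * (ζ + δ * C / (1 - δ)) := by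
    have heq : (1 / ε) * (ζ + δ * C / (1 - δ)) = c / (ε * (1 - δ)) := by
      rw [hc]; field_simp
    rw [heq, hK, div_le_div_iff₀ h1q (by positivity)]
    nlinarith
  linarith
end
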